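/- arXiv:2407.11619 — 3 statements merged into one kernel-verified Lean document; each statement's English description precedes it below -/
import Mathlib

section
/- For any hypothesis class H and manipulation graph G, the minimax optimal number of mistakes made by deterministic learners against realizable sequences equals the strategic Littlestone dimension: M(H,G) = SLdim(H,G). -/
open Classical

variable {X : Type*}

/-- Inclusive out-neighborhood `N⁺_G[x]` in the directed manipulation graph `G`. -/
def Nplus (G : X → X → Prop) (x : X) : Set X := insert x {v | G x v}

/-- Inclusive in-neighborhood `N⁻_G[v]`. -/
def Nminus (G : X → X → Prop) (v : X) : Set X := insert v {x | G x v}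

/-- Effective classifier: `h̃_G x = +1` iff some node of `N⁺_G[x]` is labeled positive by `h`.
    (`true` encodes the label `+1`, `false` the label `-1`.) -/
noncomputable def eff (G : X → X → Prop) (h : X → Bool) (x : X) : Bool :=
  if ∃ v ∈ Nplus G x, h v = true then true else false

/-- Subclass of `F` consistent with the false-negative observation `(v,+1)`. -/
noncomputable def consFN (G : X → X → Prop) (F : Set (X → Bool)) (v : X) : Set (X → Bool) :=
  {h ∈ F | eff G h v = true}

/-- Subclass of `F` consistent with the false-positive observation `(v,-1)`. -/
noncomputable def consFP (G : X → X → Prop) (F : Set (X → Bool)) (v : X) : Set (X → Bool) :=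
  {h ∈ F | ∃ x ∈ Nminus G v, eff G h x = false}

/-- Subclass of `F` consistent with observation `(v,y)`. -/
noncomputable def consObs (G : X → X → Prop) (F : Set (X → Bool)) (v : X) (y : Bool) :
    Set (X → Bool) :=
  if y = true then consFN G F v else consFP G F v

/-- `Shatters G H d`: there exists a strategic Littlestone tree of depth `d` shattered by `H`
under the manipulation graph `G`.  The root of a depth-`(d+1)` tree is a node `x` with one
false-negative edge `(x,+1)` and false-positive edges `(v,-1)` for every `v ∈ N⁺_G[x]`, and
path consistency decomposes into consistency with the first edge together with shattering of
the corresponding subtree by the consistent subclass. -/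
noncomputable def Shatters (G : X → X → Prop) (H : Set (X → Bool)) : ℕ → Prop
  | 0 => H.Nonempty
  | d + 1 => ∃ x : X,
      Shatters G (consFN G H x) d ∧ ∀ v ∈ Nplus G x, Shatters G (consFP G H v) d

/-- The strategic Littlestone dimension of `H` under `G`. -/
noncomputable def SLdim (G : X → X → Prop) (H : Set (X → Bool)) : ℕ∞ :=
  sSup {d : ℕ∞ | ∃ n : ℕ, d = n ∧ Shatters G H n}


/-- A deterministic online learner: maps the history of observed (manipulated feature, label)
pairs to the classifier committed to in the next round. -/
abbrev Alg (X : Type*) := List (X × Bool) → X → Bool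

/-- `v` is a valid best response of an agent with true features `x` facing classifier `h`:
either `v` is a positively-labeled node of `N⁺_G[x]`, or the whole neighborhood is labeled
negative and the agent stays put. -/
def isBR (G : X → X → Prop) (h : X → Bool) (x v : X) : Prop :=
  (v ∈ Nplus G x ∧ h v = true) ∨ (v = x ∧ ∀ u ∈ Nplus G x, h u = false)

/-- The history of observations available to the learner before round `t`. -/
def hist (v : ℕ → X) (y : ℕ → Bool) (t : ℕ) : List (X × Bool) :=
  (List.range t).map fun i => (v i, y i)

/-- The sequence of agents `(x_t , y_t)_{t < T}` is realizable: some `h* ∈ H` labels every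
agent correctly under manipulation. -/
noncomputable def RealizableSeq (G : X → X → Prop) (H : Set (X → Bool)) (T : ℕ)
    (x : ℕ → X) (y : ℕ → Bool) : Prop :=
  ∃ h ∈ H, ∀ t < T, eff G h (x t) = y t

/-- Each observed node `v t` is a valid best response to the learner's classifier at round `t`. -/
def ValidPlay (G : X → X → Prop) (A : Alg X) (T : ℕ) (x : ℕ → X) (y : ℕ → Bool)
    (v : ℕ → X) : Prop :=
  ∀ t < T, isBR G (A (hist v y t)) (x t) (v t)

/-- Number of mistakes of algorithm `A` over `T` rounds of the play `(v,y)`. -/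
def mistakes (A : Alg X) (T : ℕ) (y : ℕ → Bool) (v : ℕ → X) : ℕ :=
  ((Finset.range T).filter fun t => A (hist v y t) (v t) ≠ y t).card

/-- Worst-case number of mistakes of the deterministic learner `A` over all realizable
adversarial plays. -/
noncomputable def MistakeBound (G : X → X → Prop) (H : Set (X → Bool)) (A : Alg X) : ℕ∞ :=
  sSup {n : ℕ∞ | ∃ (T : ℕ) (x : ℕ → X) (y : ℕ → Bool) (v : ℕ → X),
    RealizableSeq G H T x y ∧ ValidPlay G A T x y v ∧ n = (mistakes A T y v : ℕ∞)}

/-- The minimax optimal deterministic mistake bound `M(H,G)`. -/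
noncomputable def Mopt (G : X → X → Prop) (H : Set (X → Bool)) : ℕ∞ :=
  ⨅ A : Alg X, MistakeBound G H A

/-!
Upper bound: the strategic Standard Optimal Algorithm keeps a version space `F` containing the
target and a budget `d` such that `F` does not shatter depth `d + 1`, and labels `v` negative
exactly when the hypotheses in `F` consistent with `(v, -1)` shatter depth `d`. Whenever it errs
on a best-responding agent, the hypotheses consistent with the observation still contain the
target but no longer shatter depth `d`, so the budget drops by one and can never go negative.

Lower bound: any learner can be driven down a shattered tree. At the root `x`, either the learner
labels some `u ∈ N⁺_G[x]` positive and a negative agent moves there, or it labels all of `N⁺_G[x]`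
negative and a positive agent stays at `x`; the learner errs and the consistent subclass shatters
the corresponding subtree.
-/

section Basic

variable {G : X → X → Prop}

lemma mem_nplus_self (x : X) : x ∈ Nplus G x := Set.mem_insert _ _

lemma mem_nminus_iff_mem_nplus {x v : X} : x ∈ Nminus G v ↔ v ∈ Nplus G x := by
  simp only [Nminus, Nplus, Set.mem_insert_iff, Set.mem_ofPred_eq, eq_comm]

lemma le_sldim_of_shatters {H : Set (X → Bool)} {n : ℕ} (hS : Shatters G H n) :
    (n : ℕ∞) ≤ SLdim G H :=
  le_sSup ⟨n, rfl, hS⟩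

lemma hist_succ (v : ℕ → X) (y : ℕ → Bool) (t : ℕ) :
    hist v y (t + 1) = hist v y t ++ [(v t, y t)] := by
  simp [hist, List.range_succ]

lemma hist_casesOn_succ (a : X) (b : Bool) (v : ℕ → X) (y : ℕ → Bool) (t : ℕ) :
    hist (fun n => Nat.casesOn n a v) (fun n => Nat.casesOn n b y) (t + 1) =
      (a, b) :: hist v y t := by
  simp [hist, List.range_succ_eq_map]

lemma mistakes_succ (A : Alg X) (t : ℕ) (y : ℕ → Bool) (v : ℕ → X) :
    mistakes A (t + 1) y v =
      mistakes A t y v + if A (hist v y t) (v t) ≠ y t then 1 else 0 := by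
  unfold mistakes
  rw [Finset.range_add_one, Finset.filter_insert]
  split_ifs with h
  · rw [Finset.card_insert_of_notMem (by simp)]
  · rfl

/-- A missed positive agent cannot have moved, and a false positive at `v` came from some `x` with
`v ∈ N⁺_G[x]`. -/
lemma mem_consObs_of_isBR_of_ne {F : Set (X → Bool)} {h c : X → Bool} {x v : X} {y : Bool}
    (hF : h ∈ F) (hxy : eff G h x = y) (hbr : isBR G c x v) (hc : c v ≠ y) :
    h ∈ consObs G F v y := by
  cases y with
  | true =>
    obtain ⟨-, hv⟩ | ⟨rfl, -⟩ := hbr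
    · exact absurd hv hc
    · exact ⟨hF, hxy⟩
  | false =>
    obtain ⟨hxv, -⟩ | ⟨rfl, hall⟩ := hbr
    · exact ⟨hF, x, mem_nminus_iff_mem_nplus.mpr hxv, hxy⟩
    · exact absurd (hall _ (mem_nplus_self _)) hc

end Basic

section SOA

variable (G : X → X → Prop)

noncomputable def soaPredict (F : Set (X → Bool)) (d : ℕ) (v : X) : Bool :=
  !decide (Shatters G (consFP G F v) d)

noncomputable def soaStep (s : Set (X → Bool) × ℕ) (o : X × Bool) : Set (X → Bool) × ℕ :=
  if soaPredict G s.1 s.2 o.1 = o.2 then s else (consObs G s.1 o.1 o.2, s.2 - 1)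

noncomputable def soaState (H : Set (X → Bool)) (D : ℕ) (l : List (X × Bool)) :
    Set (X → Bool) × ℕ :=
  l.foldl (soaStep G) (H, D)

noncomputable def soa (H : Set (X → Bool)) (D : ℕ) : Alg X :=
  fun l => soaPredict G (soaState G H D l).1 (soaState G H D l).2

variable {G}

lemma soaState_hist_succ (H : Set (X → Bool)) (D : ℕ) (v : ℕ → X) (y : ℕ → Bool) (t : ℕ) :
    soaState G H D (hist v y (t + 1)) = soaStep G (soaState G H D (hist v y t)) (v t, y t) := by
  rw [hist_succ, soaState, List.foldl_append]
  rfl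

lemma not_shatters_consObs_of_isBR_of_ne {F : Set (X → Bool)} {d : ℕ} {x v : X} {y : Bool}
    (hF : ¬ Shatters G F (d + 1)) (hbr : isBR G (soaPredict G F d) x v)
    (hc : soaPredict G F d v ≠ y) :
    ¬ Shatters G (consObs G F v y) d := by
  cases y with
  | true =>
    obtain ⟨-, hv⟩ | ⟨rfl, hall⟩ := hbr
    · exact absurd hv hc
    · intro hFN
      refine hF ⟨v, hFN, fun u hu => ?_⟩
      simpa [soaPredict] using hall u hu
  | false => simpa [soaPredict, consObs] using hc

lemma soaStep_spec {s : Set (X → Bool) × ℕ} {h : X → Bool} {x v : X} {y : Bool}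
    (hh : h ∈ s.1) (hs : ¬ Shatters G s.1 (s.2 + 1)) (hxy : eff G h x = y)
    (hbr : isBR G (soaPredict G s.1 s.2) x v) :
    h ∈ (soaStep G s (v, y)).1 ∧ ¬ Shatters G (soaStep G s (v, y)).1 ((soaStep G s (v, y)).2 + 1) ∧
      (soaStep G s (v, y)).2 + (if soaPredict G s.1 s.2 v ≠ y then 1 else 0) = s.2 := by
  by_cases hc : soaPredict G s.1 s.2 v = y
  · simp [soaStep, hc, hh, hs]
  · have hmem := mem_consObs_of_isBR_of_ne hh hxy hbr hc
    have hns := not_shatters_consObs_of_isBR_of_ne hs hbr hc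
    have hpos : s.2 ≠ 0 := by
      rintro h0
      exact hns (h0 ▸ ⟨h, hmem⟩)
    simp only [soaStep, hc, if_false, ne_eq, not_false_eq_true, if_true]
    exact ⟨hmem, by rwa [Nat.sub_add_cancel (Nat.one_le_iff_ne_zero.mpr hpos)], by omega⟩

lemma soa_mistakes_add_budget {H : Set (X → Bool)} {D T : ℕ} {x v : ℕ → X} {y : ℕ → Bool}
    {h : X → Bool} (hND : ¬ Shatters G H (D + 1)) (hh : h ∈ H)
    (hreal : ∀ t < T, eff G h (x t) = y t) (hvalid : ValidPlay G (soa G H D) T x y v) :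
    ∀ t ≤ T, h ∈ (soaState G H D (hist v y t)).1 ∧
      ¬ Shatters G (soaState G H D (hist v y t)).1 ((soaState G H D (hist v y t)).2 + 1) ∧
      mistakes (soa G H D) t y v + (soaState G H D (hist v y t)).2 = D
  | 0, _ => ⟨hh, hND, by
      simp only [mistakes, Finset.range_zero, Finset.filter_empty, Finset.card_empty, zero_add]
      rfl⟩
  | t + 1, ht => by
    obtain ⟨hmem, hns, hcount⟩ := soa_mistakes_add_budget hND hh hreal hvalid t (by omega)
    obtain ⟨hmem', hns', hbudget⟩ :=
      soaStep_spec hmem hns (hreal t (by omega)) (hvalid t (by omega))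
    rw [soaState_hist_succ, mistakes_succ]
    refine ⟨hmem', hns', ?_⟩
    unfold soa at hcount ⊢
    omega

lemma mistakeBound_soa_le {H : Set (X → Bool)} {D : ℕ} (hND : ¬ Shatters G H (D + 1)) :
    MistakeBound G H (soa G H D) ≤ D := by
  refine sSup_le ?_
  rintro n ⟨T, x, y, v, ⟨h, hh, hreal⟩, hvalid, rfl⟩
  have := (soa_mistakes_add_budget hND hh hreal hvalid T le_rfl).2.2
  exact_mod_cast (by omega : mistakes (soa G H D) T y v ≤ D)

lemma mopt_le_of_not_shatters {H : Set (X → Bool)} {D : ℕ} (hND : ¬ Shatters G H (D + 1)) :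
    Mopt G H ≤ D :=
  (iInf_le (MistakeBound G H) _).trans (mistakeBound_soa_le hND)

end SOA

section Adversary

variable (G : X → X → Prop)

def ForcesMistakes (A : Alg X) (F : Set (X → Bool)) (pre : List (X × Bool)) (n : ℕ) : Prop :=
  ∃ (x v : ℕ → X) (y : ℕ → Bool), ∃ h ∈ F, ∀ t < n,
    A (pre ++ hist v y t) (v t) ≠ y t ∧ isBR G (A (pre ++ hist v y t)) (x t) (v t) ∧
      eff G h (x t) = y t

variable {G}

lemma consObs_subset (F : Set (X → Bool)) (v : X) (y : Bool) : consObs G F v y ⊆ F := by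
  cases y <;> exact fun _ hh => hh.1

lemma forcesMistakes_zero [Nonempty X] {A : Alg X} {F : Set (X → Bool)} (hF : F.Nonempty)
    (pre : List (X × Bool)) : ForcesMistakes G A F pre 0 :=
  let ⟨h, hh⟩ := hF
  ⟨fun _ => Classical.arbitrary X, fun _ => Classical.arbitrary X, fun _ => true, h, hh,
    fun _ ht => absurd ht (Nat.not_lt_zero _)⟩

lemma ForcesMistakes.cons {A : Alg X} {F : Set (X → Bool)} {pre : List (X × Bool)} {n : ℕ}
    {u : X} {b : Bool} (hu : A pre u ≠ b)
    (hagent : ∀ h ∈ consObs G F u b, ∃ x, isBR G (A pre) x u ∧ eff G h x = b)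
    (hforce : ForcesMistakes G A (consObs G F u b) (pre ++ [(u, b)]) n) :
    ForcesMistakes G A F pre (n + 1) := by
  obtain ⟨x, v, y, h, hh, hplay⟩ := hforce
  obtain ⟨x₀, hbr, heff⟩ := hagent h hh
  refine ⟨fun t => Nat.casesOn t x₀ x, fun t => Nat.casesOn t u v, fun t => Nat.casesOn t b y,
    h, consObs_subset F u b hh, ?_⟩
  rintro (_ | t) ht
  · simpa [hist] using ⟨hu, hbr, heff⟩
  · rw [hist_casesOn_succ]
    simpa using hplay t (by omega)

lemma exists_mistake_of_shatters_succ {F : Set (X → Bool)} {n : ℕ} (c : X → Bool)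
    (hS : Shatters G F (n + 1)) :
    ∃ u b, c u ≠ b ∧ Shatters G (consObs G F u b) n ∧
      ∀ h ∈ consObs G F u b, ∃ x, isBR G c x u ∧ eff G h x = b := by
  obtain ⟨x₀, hFN, hFP⟩ := hS
  by_cases hpos : ∃ u ∈ Nplus G x₀, c u = true
  · obtain ⟨u, hu, hcu⟩ := hpos
    refine ⟨u, false, by simp [hcu], by simpa [consObs] using hFP u hu, ?_⟩
    rintro h ⟨-, x, hx, heff⟩
    exact ⟨x, Or.inl ⟨mem_nminus_iff_mem_nplus.mp hx, hcu⟩, heff⟩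
  · push Not at hpos
    refine ⟨x₀, true, hpos x₀ (mem_nplus_self x₀), by simpa [consObs] using hFN, ?_⟩
    rintro h ⟨-, heff⟩
    exact ⟨x₀, Or.inr ⟨rfl, fun u hu => by simpa using hpos u hu⟩, heff⟩

lemma forcesMistakes_of_shatters [Nonempty X] (A : Alg X) :
    ∀ {n : ℕ} {F : Set (X → Bool)} (pre : List (X × Bool)), Shatters G F n →
      ForcesMistakes G A F pre n
  | 0, _, pre, hS => forcesMistakes_zero hS pre
  | _ + 1, _, pre, hS =>
    let ⟨_, _, hu, hS', hagent⟩ := exists_mistake_of_shatters_succ (A pre) hS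
    (forcesMistakes_of_shatters A _ hS').cons hu hagent

lemma mistakes_eq_of_forall_ne {A : Alg X} {T : ℕ} {y : ℕ → Bool} {v : ℕ → X}
    (h : ∀ t < T, A (hist v y t) (v t) ≠ y t) : mistakes A T y v = T := by
  rw [mistakes, Finset.filter_true_of_mem (fun t ht => h t (Finset.mem_range.mp ht)),
    Finset.card_range]

lemma le_mopt_of_shatters {H : Set (X → Bool)} {n : ℕ} (hS : Shatters G H n) :
    (n : ℕ∞) ≤ Mopt G H := by
  refine le_iInf fun A => ?_
  rcases n with _ | n
  · exact zero_le
  have : Nonempty X := let ⟨x₀, _⟩ := hS; ⟨x₀⟩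
  obtain ⟨x, v, y, h, hh, hplay⟩ := forcesMistakes_of_shatters A [] hS
  simp only [List.nil_append] at hplay
  refine le_sSup ⟨n + 1, x, y, v, ⟨h, hh, fun t ht => (hplay t ht).2.2⟩,
    fun t ht => (hplay t ht).2.1, ?_⟩
  rw [mistakes_eq_of_forall_ne fun t ht => (hplay t ht).1]

end Adversary

/-- For any hypothesis class `H` and manipulation graph `G`, the minimax
optimal number of mistakes of deterministic learners against realizable sequences equals the
strategic Littlestone dimension: `M(H,G) = SLdim(H,G)`. -/
theorem minimax_mistakes_eq_SLdim (X : Type*) (G : X → X → Prop) (H : Set (X → Bool)) :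
    Mopt G H = SLdim G H := by
  refine le_antisymm ?_ (sSup_le fun _ ⟨n, hd, hS⟩ => hd ▸ le_mopt_of_shatters hS)
  cases hdim : SLdim G H using ENat.recTopCoe with
  | top => exact le_top
  | coe D =>
    refine mopt_le_of_not_shatters fun hS => ?_
    have := hdim ▸ le_sldim_of_shatters hS
    norm_cast at this
    omega
end

section
/- For the clique K_N with hypothesis class consisting of all functions {-1,+1}^{K_N}, the effective classifier of every hypothesis is constant, and the deterministic strategy 'predict all-negative until the first mistake, then all-positive forever' makes at most 1 mistake on any realizable sequence; hence SLdim({±1}^{K_N}, K_N) ≤ 1, while Δ⁺·Ldim of the class is N·N. -/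
open Classical

variable {X : Type*}

/-- `LShatters H d`: there exists a classical Littlestone tree of depth `d` shattered by `H`. -/
def LShatters (H : Set (X → Bool)) : ℕ → Prop
  | 0 => H.Nonempty
  | d + 1 => ∃ x : X,
      LShatters {h ∈ H | h x = true} d ∧ LShatters {h ∈ H | h x = false} d

/-- The classical Littlestone dimension of `H`. -/
noncomputable def Ldim (H : Set (X → Bool)) : ℕ∞ :=
  sSup {d : ℕ∞ | ∃ n : ℕ, d = n ∧ LShatters H n}


/-- The complete (bidirected) graph on `Fin N`. -/
def cliqueG (N : ℕ) : Fin N → Fin N → Prop := fun a b => a ≠ b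

/-- The deterministic strategy "predict all-negative until the first mistake, then
all-positive forever". -/
def flipAlg (N : ℕ) : Alg (Fin N) := fun l _ => l.any fun p => p.2

/-! On the clique every closed out-neighbourhood is the whole vertex set, so `eff (cliqueG N) h`
is the constant `∃ v, h v = true`. A realizable sequence therefore carries a single label, which
`flipAlg` reads off after at most one mistake. A hypothesis consistent with a false negative
has effective label `+1` everywhere and so is consistent with no false positive: below the
false-negative child of any root, every false-positive child is empty, and no strategic
Littlestone tree has depth `2`. -/

theorem not_shatters_empty (G : X → X → Prop) (n : ℕ) : ¬ Shatters G ∅ n := by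
  induction n with
  | zero => simp [Shatters]
  | succ n ih =>
    rintro ⟨x, hFN, -⟩
    exact ih (by simpa [consFN] using hFN)

theorem lShatters_card_of_forall_exists_eqOn (s : Finset X) :
    ∀ H : Set (X → Bool), (∀ f : X → Bool, ∃ h ∈ H, Set.EqOn h f s) → LShatters H s.card := by
  induction s using Finset.induction_on with
  | empty =>
    intro H hH
    obtain ⟨h, hh, -⟩ := hH fun _ => true
    exact ⟨h, hh⟩
  | insert a s ha ih =>
    intro H hH
    have hsub (b : Bool) (f : X → Bool) : ∃ h ∈ {h ∈ H | h a = b}, Set.EqOn h f s := by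
      obtain ⟨h, hh, hEq⟩ := hH (Function.update f a b)
      refine ⟨h, ⟨hh, by simpa using hEq (Finset.mem_insert_self a s)⟩, fun u hu => ?_⟩
      have hua : u ≠ a := fun hua => ha (hua ▸ hu)
      simpa [hua] using hEq (Finset.mem_insert_of_mem hu)
    rw [Finset.card_insert_of_notMem ha]
    exact ⟨a, ih _ (hsub true), ih _ (hsub false)⟩

theorem LShatters.two_pow_le_ncard [Finite X] :
    ∀ {n : ℕ} {H : Set (X → Bool)}, LShatters H n → 2 ^ n ≤ H.ncard
  | 0, _, ⟨h, hh⟩ => (Set.ncard_pos (Set.toFinite _)).mpr ⟨h, hh⟩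
  | n + 1, H, ⟨x, hT, hF⟩ => by
    have hdisj : Disjoint {h ∈ H | h x = true} {h ∈ H | h x = false} :=
      Set.disjoint_left.mpr fun h hpos hneg => by simp [hpos.2] at hneg
    have hunion : {h ∈ H | h x = true} ∪ {h ∈ H | h x = false} = H := by
      ext h
      cases hx : h x <;> simp [hx]
    calc 2 ^ (n + 1) = 2 ^ n + 2 ^ n := by ring
      _ ≤ {h ∈ H | h x = true}.ncard + {h ∈ H | h x = false}.ncard :=
        add_le_add hT.two_pow_le_ncard hF.two_pow_le_ncard
      _ = H.ncard := by rw [← Set.ncard_union_eq hdisj, hunion]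

theorem Ldim_univ [Fintype X] : Ldim (Set.univ : Set (X → Bool)) = Fintype.card X := by
  apply le_antisymm
  · refine sSup_le ?_
    rintro _ ⟨n, rfl, hn⟩
    have h2 : 2 ^ n ≤ 2 ^ Fintype.card X := by
      simpa [Nat.card_eq_fintype_card] using hn.two_pow_le_ncard
    exact_mod_cast (Nat.pow_le_pow_iff_right one_lt_two).mp h2
  · refine le_sSup ⟨_, rfl, ?_⟩
    exact lShatters_card_of_forall_exists_eqOn Finset.univ _ fun f => ⟨f, trivial, fun _ _ => rfl⟩

theorem Nplus_cliqueG (N : ℕ) (x : Fin N) : Nplus (cliqueG N) x = Set.univ :=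
  Set.eq_univ_of_forall fun v => (eq_or_ne v x).imp id Ne.symm

theorem eff_cliqueG (N : ℕ) (h : Fin N → Bool) (x : Fin N) :
    eff (cliqueG N) h x = decide (∃ v, h v = true) := by
  simp [eff, Nplus_cliqueG]

theorem consFP_consFN_cliqueG (N : ℕ) (H : Set (Fin N → Bool)) (x v : Fin N) :
    consFP (cliqueG N) (consFN (cliqueG N) H x) v = ∅ :=
  Set.eq_empty_of_forall_notMem fun h ⟨⟨_, hpos⟩, _, _, hneg⟩ => by
    simp_all [eff_cliqueG]

theorem not_shatters_cliqueG_add_two (N : ℕ) (H : Set (Fin N → Bool)) (n : ℕ) :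
    ¬ Shatters (cliqueG N) H (n + 2) := by
  rintro ⟨_, ⟨x, -, hFP⟩, -⟩
  have := hFP x (Set.mem_insert x _)
  rw [consFP_consFN_cliqueG] at this
  exact not_shatters_empty _ _ this

theorem SLdim_cliqueG_le_one (N : ℕ) (H : Set (Fin N → Bool)) : SLdim (cliqueG N) H ≤ 1 := by
  refine sSup_le ?_
  rintro _ ⟨n, rfl, hn⟩
  obtain _ | _ | n := n
  · exact zero_le_one
  · exact le_rfl
  · exact absurd hn (not_shatters_cliqueG_add_two N H n)

theorem RealizableSeq.label_eq_of_cliqueG {N : ℕ} {H : Set (Fin N → Bool)} {T : ℕ}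
    {x : ℕ → Fin N} {y : ℕ → Bool} (hxy : RealizableSeq (cliqueG N) H T x y) {s t : ℕ}
    (hs : s < T) (ht : t < T) : y s = y t := by
  obtain ⟨h, -, hh⟩ := hxy
  rw [← hh s hs, ← hh t ht, eff_cliqueG, eff_cliqueG]

theorem flipAlg_hist (N : ℕ) (v : ℕ → Fin N) (y : ℕ → Bool) (t : ℕ) (u : Fin N) :
    flipAlg N (hist v y t) u = decide (∃ i < t, y i = true) := by
  rw [Bool.eq_iff_iff]
  simp [flipAlg, hist, List.any_eq_true]

theorem mistakes_flipAlg_le_one (N : ℕ) {T : ℕ} {y : ℕ → Bool} (v : ℕ → Fin N)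
    (hy : ∀ s < T, ∀ t < T, y s = y t) : mistakes (flipAlg N) T y v ≤ 1 := by
  suffices hsub : (Finset.range T).filter (fun t => flipAlg N (hist v y t) (v t) ≠ y t) ⊆ {0} from
    Finset.card_le_card hsub
  intro t ht
  obtain ⟨htT, hmis⟩ := by simpa using ht
  by_contra ht0
  have htpos : 0 < t := Nat.pos_of_ne_zero (by simpa using ht0)
  have hyt : ∀ i < t, y i = y t := fun i hi => hy i (hi.trans htT) t htT
  apply hmis
  rw [flipAlg_hist]
  cases hyt' : y t
  · simpa using fun i hi => (hyt i hi).trans hyt'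
  · simpa using ⟨0, htpos, (hyt 0 htpos).trans hyt'⟩

theorem MistakeBound_cliqueG_flipAlg_le_one (N : ℕ) (H : Set (Fin N → Bool)) :
    MistakeBound (cliqueG N) H (flipAlg N) ≤ 1 := by
  refine sSup_le ?_
  rintro _ ⟨T, x, y, v, hxy, -, rfl⟩
  exact_mod_cast mistakes_flipAlg_le_one N v fun s hs t ht => hxy.label_eq_of_cliqueG hs ht

theorem clique_SLdim_le_one_general (N : ℕ) :
    (∀ (h : Fin N → Bool) (x x' : Fin N), eff (cliqueG N) h x = eff (cliqueG N) h x') ∧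
    MistakeBound (cliqueG N) Set.univ (flipAlg N) ≤ 1 ∧
    SLdim (cliqueG N) (Set.univ : Set (Fin N → Bool)) ≤ 1 ∧
    Ldim (Set.univ : Set (Fin N → Bool)) = (N : ℕ∞) := by
  refine ⟨fun h x x' => ?_, MistakeBound_cliqueG_flipAlg_le_one N _, SLdim_cliqueG_le_one N _, ?_⟩
  · rw [eff_cliqueG, eff_cliqueG]
  · simpa using Ldim_univ (X := Fin N)

/-- For the clique `K_N` with the hypothesis class of all functions, the
effective classifier of every hypothesis is constant; the strategy "all-negative until the
first mistake, then all-positive" makes at most one mistake on any realizable sequence; hence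
`SLdim({±1}^{K_N}, K_N) ≤ 1`, while the classical Littlestone dimension of the class is `N`
(so that `Δ⁺ · Ldim` is of order `N · N`). -/
theorem clique_SLdim_le_one (N : ℕ) (hN : 1 ≤ N) :
    (∀ (h : Fin N → Bool) (x x' : Fin N), eff (cliqueG N) h x = eff (cliqueG N) h x') ∧
    MistakeBound (cliqueG N) Set.univ (flipAlg N) ≤ 1 ∧
    SLdim (cliqueG N) (Set.univ : Set (Fin N → Bool)) ≤ 1 ∧
    Ldim (Set.univ : Set (Fin N → Bool)) = (N : ℕ∞) :=
  clique_SLdim_le_one_general N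
end

section
/- In the Biased Weighted Majority Vote algorithm run with input graph G containing all edges of the true manipulation graph G*, every expert whose weight is penalized at a mistake round must itself have made a mistake under G* at that round: on a false positive at v_t, a penalized expert labels v_t positive and hence its effective classifier under G* labels the true agent positively while the truth is negative; on a false negative, a penalized expert labels all of N̂[v_t] ⊇ N⁺_{G*}[v_t] negative, hence its effective classifier under G* labels the agent negative while the truth is positive. -/
open Classical

variable {X : Type*}

theorem eff_eq_true_iff (G : X → X → Prop) (h : X → Bool) (x : X) :
    eff G h x = true ↔ ∃ v ∈ Nplus G x, h v = true := by
  simp [eff]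

theorem eff_eq_false_iff (G : X → X → Prop) (h : X → Bool) (x : X) :
    eff G h x = false ↔ ∀ v ∈ Nplus G x, h v = false := by
  simp [eff]

theorem penalized_experts_err_general (X : Type*) (Gs G : X → X → Prop) :
    (∀ (x v : X) (e : X → Bool),
      v ∈ Nplus Gs x → e v = true → eff Gs e x = true) ∧
    (∀ (x : X) (Nh : Set X) (e : X → Bool),
      Nplus Gs x ⊆ Nh → Nh ⊆ Nplus G x → (∀ u ∈ Nh, e u = false) →
      eff Gs e x = false) :=
  ⟨fun _ v _ hv he => (eff_eq_true_iff _ _ _).2 ⟨v, hv, he⟩,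
    fun _ _ _ hNh _ hneg => (eff_eq_false_iff _ _ _).2 fun v hv => hneg v (hNh hv)⟩

/-- In Biased Weighted Majority Vote run with an input graph `G` containing
all edges of the true manipulation graph `G*`, every penalized expert made a mistake under
`G*`: on a false positive at `v_t ∈ N⁺_{G*}[x_t]` (true label `-1`), a penalized expert labels
`v_t` positive, hence its effective classifier under `G*` labels the agent `x_t` positive; on
a false negative at `v_t = x_t` (true label `+1`), a penalized expert labels all of a set
`N̂[v_t]` with `N⁺_{G*}[v_t] ⊆ N̂[v_t] ⊆ N⁺_G[v_t]` negative, hence its effective classifier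
under `G*` labels `x_t` negative. -/
theorem penalized_experts_err (X : Type*) (Gs G : X → X → Prop)
    (hsub : ∀ a b : X, Gs a b → G a b) :
    (∀ (x v : X) (e : X → Bool),
      v ∈ Nplus Gs x → e v = true → eff Gs e x = true) ∧
    (∀ (x : X) (Nh : Set X) (e : X → Bool),
      Nplus Gs x ⊆ Nh → Nh ⊆ Nplus G x → (∀ u ∈ Nh, e u = false) →
      eff Gs e x = false) :=
  penalized_experts_err_general X Gs G
end
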